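/- Let Δ > 0 and a < b real, I = [a,b]. Define B⁻(x) = H(x) − K(x) with Beurling's H and Fejér's K, and F_I(x) = (1/2)(B⁻(Δ(x−a)) + B⁻(Δ(b−x))). Then for all real x: 0 ≤ 1_I(x) − F_I(x) ≤ K(Δ(x−a)) + K(Δ(b−x)), where 1_I is the indicator function of [a,b]. -/

import Mathlib

/-!
Fix `y > 0` not an integer and put `s = (sin πy / π)²`, so that `K(y) = s / y²`.
Parseval's identity for `t ↦ e^{2πiyt}` on `[0, 1]` gives `s · ∑_{n ∈ ℤ} (y - n)⁻² = 1`, and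
splitting off the terms with `n ≤ 0` turns the definition of `H` into
`H(y) = 1 - K(y) + 2s (1/y - ∑_{n ≥ 1} (y + n)⁻²)`.
Comparing the tail with the telescoping sums `∑ 1/((c + n)(c + n + 1)) = 1/c` for `c = y, y + 1`
puts the bracket in `[0, 1/y²]`, so `|sgn y - H(y)| ≤ K(y)`; oddness of `H` and evenness of `K`
extend this to all `y`.

With the right-continuous sign `σ` (`σ(0) = 1`), `1_{[a,b]}(x) = (σ(x - a) + σ(b - x)) / 2` for
every `x`, and `0 ≤ σ - B⁻ ≤ 2K` everywhere (at `0` because `B⁻(0) = -1` and `K(0) = 1`).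
Averaging the two instances gives both bounds.
-/

open Real Set Classical

/-- The Fejér kernel `K(y) = (sin πy / (πy))²`, with `K(0) = 1`. -/
noncomputable def fejerK (y : ℝ) : ℝ :=
  if y = 0 then 1 else (Real.sin (Real.pi * y) / (Real.pi * y)) ^ 2

/-- Beurling's function `H(y) = (sin πy/π)² (∑_{n ∈ ℤ} sgn(n)/(y-n)² + 2/y)`,
extended by continuity (value `sgn y`) at the integers. -/
noncomputable def beurlingH (y : ℝ) : ℝ :=
  if ∃ n : ℤ, (n : ℝ) = y then Real.sign y
  else (Real.sin (Real.pi * y) / Real.pi) ^ 2 *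
    ((∑' n : ℤ, (Int.sign n : ℝ) / (y - (n : ℝ)) ^ 2) + 2 / y)

/-- Beurling's minorant `B⁻ = H - K` of the sign function. -/
noncomputable def Bminus (y : ℝ) : ℝ := beurlingH y - fejerK y

/-- The Beurling–Selberg minorant of the indicator of `[a,b]`. -/
noncomputable def selbergF (Δ a b x : ℝ) : ℝ :=
  (1 / 2) * (Bminus (Δ * (x - a)) + Bminus (Δ * (b - x)))

lemma fourierCoeffOn_cexp {y : ℝ} (hy : ∀ n : ℤ, (n : ℝ) ≠ y) (n : ℤ) :
    fourierCoeffOn zero_lt_one (fun t : ℝ => Complex.exp (2 * π * Complex.I * y * t)) n =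
      (Complex.exp (2 * π * Complex.I * y) - 1) / (2 * π * Complex.I * (y - n)) := by
  have hc : 2 * π * Complex.I * (y - n) ≠ 0 := by
    have hyn : (y : ℂ) - n ≠ 0 := sub_ne_zero.mpr (by exact_mod_cast (hy n).symm)
    simp [Real.pi_ne_zero, Complex.I_ne_zero, hyn]
  rw [fourierCoeffOn_eq_integral _ _ zero_lt_one]
  have hint : ∀ t ∈ uIcc (0:ℝ) 1, (fourier (-n) (t : AddCircle ((1:ℝ) - 0)) : ℂ) •
      Complex.exp (2 * π * Complex.I * y * t) =
        Complex.exp ((2 * π * Complex.I * (y - n)) * t) := by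
    intro t _
    rw [fourier_coe_apply, smul_eq_mul, ← Complex.exp_add]
    congr 1
    push_cast
    field_simp
    ring
  rw [intervalIntegral.integral_congr hint, integral_exp_mul_complex hc]
  have hper :
      Complex.exp (2 * π * Complex.I * (y - n)) = Complex.exp (2 * π * Complex.I * y) := by
    rw [Complex.exp_eq_exp_iff_exists_int]
    exact ⟨-n, by push_cast; ring⟩
  simp [hper]

lemma sq_norm_cexp_two_pi_I_sub_one (y : ℝ) :
    ‖Complex.exp (2 * π * Complex.I * y) - 1‖ ^ 2 = 4 * Real.sin (π * y) ^ 2 := by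
  rw [show 2 * π * Complex.I * y = Complex.I * ((2 * π * y : ℝ) : ℂ) by push_cast; ring,
    Complex.norm_exp_I_mul_ofReal_sub_one, norm_mul, Real.norm_eq_abs, Real.norm_eq_abs, mul_pow,
    sq_abs, sq_abs]
  ring_nf

open MeasureTheory in
lemma hasSum_sq_sin_div_sub_int_sq {y : ℝ} (hy : ∀ n : ℤ, (n : ℝ) ≠ y) :
    HasSum (fun n : ℤ => (Real.sin (π * y) / π) ^ 2 / (y - n) ^ 2) 1 := by
  have hmem : MemLp (fun t : ℝ => Complex.exp (2 * π * Complex.I * y * t)) 2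
      (volume.restrict (Ioc 0 1)) := by
    refine MemLp.of_bound (by fun_prop) 1 (Filter.Eventually.of_forall fun t => ?_)
    rw [Complex.norm_exp]; simp
  convert hasSum_sq_fourierCoeffOn zero_lt_one hmem using 1
  · ext n
    have hyn : y - n ≠ 0 := sub_ne_zero.mpr (hy n).symm
    symm
    rw [fourierCoeffOn_cexp hy, norm_div, div_pow, sq_norm_cexp_two_pi_I_sub_one]
    rw [show 2 * π * Complex.I * (y - n) = Complex.I * ((2 * π * (y - n) : ℝ) : ℂ) by
        push_cast; ring,
      norm_mul, Complex.norm_I, Complex.norm_real, Real.norm_eq_abs, one_mul, sq_abs]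
    field_simp
    ring
  · simp [Complex.norm_exp]

lemma hasSum_one_div_mul_add_one {c : ℝ} (hc : 0 < c) :
    HasSum (fun n : ℕ => 1 / ((c + n) * (c + n + 1))) (1 / c) := by
  have hpartial : ∀ N : ℕ,
      ∑ n ∈ Finset.range N, 1 / ((c + n) * (c + n + 1)) = 1 / c - 1 / (c + N) := by
    intro N
    have htele := Finset.sum_range_sub' (fun k : ℕ => 1 / (c + k)) N
    rw [Nat.cast_zero, add_zero] at htele
    rw [← htele]
    refine Finset.sum_congr rfl fun n _ => ?_
    have hcn : c + n ≠ 0 := by positivity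
    field_simp
    push_cast
    ring
  rw [hasSum_iff_tendsto_nat_of_nonneg (fun n => by positivity), funext hpartial]
  have hinv : Filter.Tendsto (fun N : ℕ => 1 / (c + N)) Filter.atTop (nhds 0) := by
    simpa only [one_div, Function.comp_def] using tendsto_inv_atTop_zero.comp
      (Filter.tendsto_atTop_add_const_left _ c tendsto_natCast_atTop_atTop)
  simpa using hinv.const_sub (1 / c)

lemma one_div_sq_le_one_div_mul {c : ℝ} (hc : 0 < c) (n : ℕ) :
    1 / (c + n + 1) ^ 2 ≤ 1 / ((c + n) * (c + n + 1)) :=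
  one_div_le_one_div_of_le (by positivity) (by nlinarith)

lemma summable_one_div_add_nat_add_one_sq {y : ℝ} (hy : 0 < y) :
    Summable (fun n : ℕ => 1 / (y + n + 1) ^ 2) :=
  (hasSum_one_div_mul_add_one hy).summable.of_nonneg_of_le (fun n => by positivity)
    (one_div_sq_le_one_div_mul hy)

lemma tsum_one_div_add_nat_add_one_sq_le {y : ℝ} (hy : 0 < y) :
    ∑' n : ℕ, 1 / (y + n + 1) ^ 2 ≤ 1 / y :=
  hasSum_le (one_div_sq_le_one_div_mul hy) (summable_one_div_add_nat_add_one_sq hy).hasSum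
    (hasSum_one_div_mul_add_one hy)

lemma one_div_add_one_le_tsum_one_div_add_nat_add_one_sq {y : ℝ} (hy : 0 < y) :
    1 / (y + 1) ≤ ∑' n : ℕ, 1 / (y + n + 1) ^ 2 :=
  hasSum_le (fun n => one_div_le_one_div_of_le (by positivity) (by nlinarith))
    (hasSum_one_div_mul_add_one (by linarith : 0 < y + 1))
    (summable_one_div_add_nat_add_one_sq hy).hasSum

lemma hasSum_one_sub_sign_div_sub_int_sq {y : ℝ} (hy : 0 < y) :
    HasSum (fun n : ℤ => (1 - (Int.sign n : ℝ)) / (y - n) ^ 2)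
      (1 / y ^ 2 + 2 * ∑' n : ℕ, 1 / (y + n + 1) ^ 2) := by
  refine HasSum.of_nat_of_neg_add_one ?_ ?_
  · convert hasSum_ite_eq 0 (1 / y ^ 2) using 2 with n
    rcases n.eq_zero_or_pos with rfl | hn
    · simp
    · simp [Int.sign_eq_one_of_pos (Int.natCast_pos.mpr hn), hn.ne']
  · refine ((summable_one_div_add_nat_add_one_sq hy).hasSum.mul_left 2).congr_fun fun n => ?_
    rw [Int.sign_neg, Int.sign_eq_one_of_pos (by positivity)]
    push_cast
    ring

lemma fejerK_of_ne_zero {y : ℝ} (hy : y ≠ 0) :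
    fejerK y = (Real.sin (π * y) / π) ^ 2 / y ^ 2 := by
  rw [fejerK, if_neg hy]
  ring

lemma beurlingH_of_pos {y : ℝ} (hy : 0 < y) (hni : ∀ n : ℤ, (n : ℝ) ≠ y) :
    beurlingH y = 1 - fejerK y + 2 * (Real.sin (π * y) / π) ^ 2 *
      (1 / y - ∑' n : ℕ, 1 / (y + n + 1) ^ 2) := by
  set s := (Real.sin (π * y) / π) ^ 2
  have hsign : HasSum (fun n : ℤ => s * ((Int.sign n : ℝ) / (y - n) ^ 2))
      (1 - s * (1 / y ^ 2 + 2 * ∑' n : ℕ, 1 / (y + n + 1) ^ 2)) := by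
    refine ((hasSum_sq_sin_div_sub_int_sq hni).sub
      ((hasSum_one_sub_sign_div_sub_int_sq hy).mul_left s)).congr_fun fun n => ?_
    ring
  rw [beurlingH, if_neg (not_exists.mpr hni), mul_add, ← tsum_mul_left, hsign.tsum_eq,
    fejerK_of_ne_zero hy.ne']
  ring

lemma beurlingH_neg (y : ℝ) : beurlingH (-y) = -beurlingH y := by
  have hint : (∃ n : ℤ, (n : ℝ) = -y) ↔ ∃ n : ℤ, (n : ℝ) = y :=
    ⟨fun ⟨n, hn⟩ => ⟨-n, by push_cast; linarith⟩,
      fun ⟨n, hn⟩ => ⟨-n, by push_cast; linarith⟩⟩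
  by_cases hy : ∃ n : ℤ, (n : ℝ) = y
  · rw [beurlingH, beurlingH, if_pos (hint.mpr hy), if_pos hy, Real.sign_neg]
  rw [beurlingH, beurlingH, if_neg (hint.not.mpr hy), if_neg hy]
  have hsum : ∑' n : ℤ, (Int.sign n : ℝ) / (-y - n) ^ 2 =
      -∑' n : ℤ, (Int.sign n : ℝ) / (y - n) ^ 2 := by
    rw [← tsum_neg, ← (Equiv.neg ℤ).tsum_eq]
    refine tsum_congr fun n => ?_
    rw [Equiv.neg_apply, Int.sign_neg, Int.cast_neg, Int.cast_neg, neg_sub_neg, ← neg_sub y,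
      neg_sq, neg_div]
  rw [hsum, mul_neg, Real.sin_neg]
  ring

lemma fejerK_neg (y : ℝ) : fejerK (-y) = fejerK y := by
  rcases eq_or_ne y 0 with rfl | hy
  · rw [neg_zero]
  · rw [fejerK_of_ne_zero hy, fejerK_of_ne_zero (neg_ne_zero.mpr hy), mul_neg, Real.sin_neg]
    ring

lemma fejerK_nonneg (y : ℝ) : 0 ≤ fejerK y := by
  unfold fejerK
  split_ifs
  exacts [zero_le_one, sq_nonneg _]

lemma abs_sign_sub_beurlingH_le (y : ℝ) : |Real.sign y - beurlingH y| ≤ fejerK y := by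
  by_cases hint : ∃ n : ℤ, (n : ℝ) = y
  · rw [beurlingH, if_pos hint, sub_self, abs_zero]
    exact fejerK_nonneg y
  wlog hy : 0 < y generalizing y
  · have hy0 : y ≠ 0 := fun h => hint ⟨0, by simp [h]⟩
    have hneg := this (-y) (fun ⟨n, hn⟩ => hint ⟨-n, by push_cast; linarith⟩)
      (neg_pos.mpr (lt_of_le_of_ne (not_lt.mp hy) hy0))
    rwa [Real.sign_neg, beurlingH_neg, fejerK_neg, ← neg_sub', abs_neg] at hneg
  set P := ∑' n : ℕ, 1 / (y + n + 1) ^ 2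
  have hP : 0 ≤ 1 / y - P := sub_nonneg.mpr (tsum_one_div_add_nat_add_one_sq_le hy)
  have hP' : 1 / y - P ≤ 1 / y ^ 2 := by
    have hlow := one_div_add_one_le_tsum_one_div_add_nat_add_one_sq hy
    have hgap : 1 / y - 1 / (y + 1) ≤ 1 / y ^ 2 := by
      rw [div_sub_div _ _ hy.ne' (by linarith), div_le_div_iff₀ (by positivity) (by positivity)]
      nlinarith
    linarith
  rw [beurlingH_of_pos hy fun n hn => hint ⟨n, hn⟩, Real.sign_of_pos hy,
    fejerK_of_ne_zero hy.ne', abs_le]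
  set s := (Real.sin (π * y) / π) ^ 2
  have hs : 0 ≤ s := sq_nonneg _
  have hK : s / y ^ 2 = s * (1 / y ^ 2) := mul_one_div s _ |>.symm
  constructor <;> nlinarith [mul_le_mul_of_nonneg_left hP' hs, mul_nonneg hs hP]

noncomputable def rightSign (y : ℝ) : ℝ := if 0 ≤ y then 1 else -1

lemma rightSign_mul_of_pos {c : ℝ} (hc : 0 < c) (y : ℝ) : rightSign (c * y) = rightSign y := by
  simp only [rightSign, mul_nonneg_iff_of_pos_left hc]

lemma indicator_Icc_eq_rightSign {a b : ℝ} (hab : a ≤ b) (x : ℝ) :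
    (Icc a b).indicator (fun _ => (1 : ℝ)) x = (rightSign (x - a) + rightSign (b - x)) / 2 := by
  by_cases hx : x ∈ Icc a b
  · rw [indicator_of_mem hx, rightSign, rightSign, if_pos (sub_nonneg.mpr hx.1),
      if_pos (sub_nonneg.mpr hx.2)]
    norm_num
  · rw [indicator_of_notMem hx]
    rcases not_and_or.mp hx with hxa | hxb
    · rw [rightSign, rightSign, if_neg (by linarith), if_pos (by linarith)]
      norm_num
    · rw [rightSign, rightSign, if_pos (by linarith), if_neg (by linarith)]
      norm_num

lemma rightSign_sub_Bminus_mem_Icc (y : ℝ) : rightSign y - Bminus y ∈ Icc 0 (2 * fejerK y) := by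
  rcases eq_or_ne y 0 with rfl | hy
  · rw [Bminus, beurlingH, if_pos ⟨0, Int.cast_zero⟩, Real.sign_zero, fejerK, if_pos rfl,
      rightSign, if_pos le_rfl]
    norm_num
  · have hsign : rightSign y = Real.sign y := by
      rcases hy.lt_or_gt with hy | hy
      · rw [rightSign, if_neg hy.not_ge, Real.sign_of_neg hy]
      · rw [rightSign, if_pos hy.le, Real.sign_of_pos hy]
    have hH := abs_le.mp (abs_sign_sub_beurlingH_le y)
    rw [hsign, Bminus]
    constructor <;> linarith [hH.1, hH.2]

/-- for all real `x`,
`0 ≤ 1_{[a,b]}(x) - F_I(x) ≤ K(Δ(x-a)) + K(Δ(b-x))`. -/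
theorem selbergF_minorant (Δ a b : ℝ) (hΔ : 0 < Δ) (hab : a < b) (x : ℝ) :
    0 ≤ Set.indicator (Set.Icc a b) (fun _ => (1:ℝ)) x - selbergF Δ a b x ∧
    Set.indicator (Set.Icc a b) (fun _ => (1:ℝ)) x - selbergF Δ a b x ≤
      fejerK (Δ * (x - a)) + fejerK (Δ * (b - x)) := by
  have hu := rightSign_sub_Bminus_mem_Icc (Δ * (x - a))
  have hv := rightSign_sub_Bminus_mem_Icc (Δ * (b - x))
  rw [rightSign_mul_of_pos hΔ] at hu hv
  rw [indicator_Icc_eq_rightSign hab.le, selbergF]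
  constructor <;> linarith [hu.1, hu.2, hv.1, hv.2]
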